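/- Let k ≥ 1 and let q_n denote the denominator of the n-th convergent of α_k = [\overline{1_{2k−1}, 2}]. Then for all sufficiently large m, setting n = 2km − 3, one has q_{n+1} · ‖q_n·α_k‖ = g_k(q_{n+1}) = 2D_k/(1 + √(1 − 4D_k(1 − D_k)/q_{n+1}²)); in particular q_{n+1}·‖q_n·α_k‖ > D_k. -/

import Mathlib

open Filter Real

/-- Distance from a real number to the nearest integer. -/
noncomputable def intDist (ξ : ℝ) : ℝ := |ξ - round ξ|

/-- Irrationality measure function `ψ_α(t) = min {‖qα‖ : q ∈ ℤ, 1 ≤ q ≤ t}`. -/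
noncomputable def psi (α : ℝ) (t : ℝ) : ℝ :=
  sInf {x : ℝ | ∃ q : ℤ, 1 ≤ q ∧ (q : ℝ) ≤ t ∧ x = intDist ((q : ℝ) * α)}

/-- `f₀(x) = (√5 + 1)/(√5 + √(5 - 4/x²))`. -/
noncomputable def f0 (x : ℝ) : ℝ :=
  (Real.sqrt 5 + 1) / (Real.sqrt 5 + Real.sqrt (5 - 4 / x ^ 2))

/-- Value of a finite regular continued fraction `[a₀; a₁, …, aₙ]`. -/
noncomputable def cfVal : List ℤ → ℝ
  | [] => 0
  | [a] => (a : ℝ)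
  | a :: b :: l => (a : ℝ) + 1 / cfVal (b :: l)

/-- The list `[a 0, a 1, …, a n]`. -/
def cfList (a : ℕ → ℤ) (n : ℕ) : List ℤ := (List.range (n + 1)).map a

/-- `α` is the value of the infinite continued fraction with partial quotients `a`,
i.e. the convergents `[a₀; a₁, …, aₙ]` tend to `α`. -/
def IsCFExp (a : ℕ → ℤ) (α : ℝ) : Prop :=
  Filter.Tendsto (fun n => cfVal (cfList a n)) Filter.atTop (nhds α)

/-- Denominators `q_n` of the convergents of the continued fraction with
partial quotients `a` : `q₀ = 1`, `q₁ = a₁`, `q_{n+2} = a_{n+2} q_{n+1} + q_n`. -/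
def cfDen (a : ℕ → ℤ) : ℕ → ℤ
  | 0 => 1
  | 1 => a 1
  | n + 2 => a (n + 2) * cfDen a (n + 1) + cfDen a n

/-- Partial quotients of `α_k = [overline{1_{2k-1}, 2}]` (for `k = 0` this gives
the all-ones sequence, the expansion of the golden ratio `α₀ = φ`). -/
def aSeq (k : ℕ) (n : ℕ) : ℤ := if (n + 1) % (2 * k) = 0 then 2 else 1

/-- Partial quotients of `β_k = [0; 1_{k-1}, overline{2, 1_{2k-1}}]`. -/
def bSeq (k : ℕ) (n : ℕ) : ℤ :=
  if n = 0 then 0 else if n < k then 1 else if (n - k) % (2 * k) = 0 then 2 else 1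

/-- Partial quotients of `β_k^{(1)} = [0; 1_k, overline{2, 1_{2k-1}}]`. -/
def b1Seq (k : ℕ) (n : ℕ) : ℤ :=
  if n = 0 then 0 else if n < k + 1 then 1
  else if (n - (k + 1)) % (2 * k) = 0 then 2 else 1

/-- Partial quotients of `β_k^{(2)} = [0; 1_{k-2}, overline{2, 1_{2k-1}}]`. -/
def b2Seq (k : ℕ) (n : ℕ) : ℤ :=
  if n = 0 then 0 else if n < k - 1 then 1
  else if (n - (k - 1)) % (2 * k) = 0 then 2 else 1

/-- `D_k = (2α_k + 1)/(2α_k + 2)` as a function of `α_k`. -/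
noncomputable def Dk (αk : ℝ) : ℝ := (2 * αk + 1) / (2 * αk + 2)

/-- `g_k(x) = 2D_k/(1 + √(1 - 4D_k(1-D_k)/x²))` as a function of `α_k`. -/
noncomputable def gFun (αk : ℝ) (x : ℝ) : ℝ :=
  2 * Dk αk / (1 + Real.sqrt (1 - 4 * Dk αk * (1 - Dk αk) / x ^ 2))

/-- `f_k` for odd `k`, as a function of `α_k` and `β_k`. -/
noncomputable def fOdd (αk βk : ℝ) (x : ℝ) : ℝ :=
  2 * Dk αk / (1 + Real.sqrt (1 - 2 * αk / ((2 * βk + 1) * (αk + 1) * x ^ 2)))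

/-- `f_k` for even `k`, as a function of `α_k`, `β_k^{(1)}` and `β_k^{(2)}`. -/
noncomputable def fEven (αk β1 β2 : ℝ) (x : ℝ) : ℝ :=
  2 * Dk αk / (1 + Real.sqrt (1 - 2 * αk / ((β1 + β2 + 1) * (αk + 1) * x ^ 2)))

/-- The block `(1_{2k-1}, 2)` of partial quotients. -/
def block (k : ℕ) : List ℤ := List.replicate (2 * k - 1) 1 ++ [2]

/-- `m` repetitions of the block `(1_{2k-1}, 2)`. -/
def blocks (k : ℕ) : ℕ → List ℤ
  | 0 => []
  | m + 1 => block k ++ blocks k m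

/-- Partial quotients of the finite continued fraction `[0; 1_{s-1}, 2, (1_{2k-1}, 2)^m]`. -/
def wFin (k m s : ℕ) : List ℤ := 0 :: (List.replicate (s - 1) 1 ++ [2] ++ blocks k m)

/-- Partial quotients of `[1; 1_{2k-s-1}, overline{2, 1_{2k-1}}]` (for `1 ≤ s ≤ 2k-1`). -/
def wSeq (k s : ℕ) (n : ℕ) : ℤ :=
  if n = 0 then 1
  else if n < 2 * k - s then 1
  else if (n - (2 * k - s)) % (2 * k) = 0 then 2 else 1

/-- Partial quotients of `γ = [overline{2, 1_{2k-1}}]`. -/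
def gSeq (k : ℕ) (n : ℕ) : ℤ := if n % (2 * k) = 0 then 2 else 1

/-- Partial quotients of the finite continued fraction `[0; (1_{2k-1}, 2)^{m+1}]`. -/
def topFin (k m : ℕ) : List ℤ := 0 :: blocks k (m + 1)

/-- Partial quotients of `1/α_k = [0; overline{1_{2k-1}, 2}]`. -/
def invSeq (k : ℕ) (n : ℕ) : ℤ := if n = 0 then 0 else if n % (2 * k) = 0 then 2 else 1

open Nat (fib)

-- ### numerators
def cfNum (a : ℕ → ℤ) : ℕ → ℤ
  | 0 => a 0
  | 1 => a 1 * a 0 + 1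
  | n + 2 => a (n + 2) * cfNum a (n + 1) + cfNum a n

/-- matrix of a finite continued fraction: (p, p', q, q') -/
def cfP : List ℤ → ℤ × ℤ × ℤ × ℤ
  | [] => (1, 0, 0, 1)
  | a :: l => (a * (cfP l).1 + (cfP l).2.2.1, a * (cfP l).2.1 + (cfP l).2.2.2,
      (cfP l).1, (cfP l).2.1)

lemma cfP_append (l : List ℤ) (x : ℤ) :
    cfP (l ++ [x]) = ((cfP l).1 * x + (cfP l).2.1, (cfP l).1,
      (cfP l).2.2.1 * x + (cfP l).2.2.2, (cfP l).2.2.1) := by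
  induction l with
  | nil => simp [cfP]
  | cons a t ih =>
      show cfP (a :: (t ++ [x])) = _
      simp only [cfP, ih]
      refine Prod.ext (by ring) (Prod.ext rfl (Prod.ext (by ring) rfl))

lemma cfList_succ (a : ℕ → ℤ) (n : ℕ) :
    cfList a (n + 1) = cfList a n ++ [a (n + 1)] := by
  simp [cfList, List.range_succ]

lemma cfP_cfList_zero (a : ℕ → ℤ) : cfP (cfList a 0) = (a 0, 1, 1, 0) := by
  simp [cfList, cfP]

lemma cfP_cfList (a : ℕ → ℤ) (n : ℕ) :
    cfP (cfList a (n + 1)) = (cfNum a (n + 1), cfNum a n, cfDen a (n + 1), cfDen a n) := by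
  induction n with
  | zero =>
      rw [cfList_succ, cfP_append, cfP_cfList_zero]
      simp [cfNum, cfDen]; ring
  | succ n ih =>
      rw [cfList_succ, cfP_append, ih]
      refine Prod.ext ?_ (Prod.ext rfl (Prod.ext ?_ rfl))
      · show cfNum a (n+1) * a (n+2) + cfNum a n = cfNum a (n+2)
        show cfNum a (n+1) * a (n+2) + cfNum a n = a (n + 2) * cfNum a (n + 1) + cfNum a n
        ring
      · show cfDen a (n+1) * a (n+2) + cfDen a n = cfDen a (n+2)
        show cfDen a (n+1) * a (n+2) + cfDen a n = a (n + 2) * cfDen a (n + 1) + cfDen a n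
        ring

/-- master lemma : value of a finite CF with entries ≥ 1 -/
lemma cfVal_eq (l : List ℤ) (h : ∀ x ∈ l, (1:ℤ) ≤ x) (hne : l ≠ []) :
    1 ≤ (cfP l).2.2.1 ∧ (cfP l).2.2.1 ≤ (cfP l).1 ∧
      cfVal l = ((cfP l).1 : ℝ) / ((cfP l).2.2.1 : ℝ) := by
  induction l with
  | nil => exact absurd rfl hne
  | cons a t ih =>
      have ha : (1:ℤ) ≤ a := h a (by simp)
      cases t with
      | nil => simp [cfP, cfVal]; omega
      | cons b t' =>
          obtain ⟨h1, h2, h3⟩ := ih (fun x hx => h x (by simp [hx])) (by simp)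
          have hnum1 : (1:ℤ) ≤ (cfP (b :: t')).1 := le_trans h1 h2
          refine ⟨?_, ?_, ?_⟩
          · simpa [cfP] using hnum1
          · show (cfP (b::t')).1 ≤ a * (cfP (b::t')).1 + (cfP (b::t')).2.2.1
            nlinarith
          · show cfVal (a :: b :: t') = _
            have hvpos : (0:ℝ) < ((cfP (b :: t')).1 : ℝ) := by exact_mod_cast hnum1
            have hdpos : (0:ℝ) < ((cfP (b :: t')).2.2.1 : ℝ) := by exact_mod_cast h1
            show (a:ℝ) + 1 / cfVal (b :: t') = _
            rw [h3]
            show (a:ℝ) + 1 / (_ / _) = ((a * (cfP (b::t')).1 + (cfP (b::t')).2.2.1 : ℤ) : ℝ) / ((cfP (b::t')).1 : ℝ)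
            push_cast
            field_simp

lemma cfVal_cfList_eq (a : ℕ → ℤ) (ha : ∀ i, 1 ≤ a i) (n : ℕ) :
    cfVal (cfList a n) = (cfNum a n : ℝ) / (cfDen a n : ℝ) := by
  have h : ∀ x ∈ cfList a n, (1:ℤ) ≤ x := by
    intro x hx
    simp only [cfList, List.mem_map] at hx
    obtain ⟨i, _, rfl⟩ := hx
    exact ha i
  have hne : cfList a n ≠ [] := by simp [cfList]
  obtain ⟨_, _, h3⟩ := cfVal_eq _ h hne
  cases n with
  | zero => rw [h3, cfP_cfList_zero]; simp [cfNum, cfDen]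
  | succ n => rw [h3, cfP_cfList]

section
variable (a : ℕ → ℤ) (ha : ∀ i, 1 ≤ a i)
include ha

lemma cfDen_pos : ∀ n, 1 ≤ cfDen a n ∧ cfDen a n ≤ cfDen a (n + 1) := by
  intro n
  induction n using Nat.strong_induction_on with
  | _ n ih =>
    match n with
    | 0 => exact ⟨le_refl _, by show (1:ℤ) ≤ a 1; exact ha 1⟩
    | 1 =>
        have h0 := ha 1
        have h2 := ha 2
        refine ⟨h0, ?_⟩
        show a 1 ≤ a 2 * cfDen a 1 + cfDen a 0
        show a 1 ≤ a 2 * a 1 + 1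
        nlinarith
    | n + 2 =>
        obtain ⟨h1, h2⟩ := ih (n+1) (by omega)
        obtain ⟨h0, _⟩ := ih n (by omega)
        have hd : cfDen a (n+2) = a (n+2) * cfDen a (n+1) + cfDen a n := rfl
        have hd3 : cfDen a (n+3) = a (n+3) * cfDen a (n+2) + cfDen a (n+1) := rfl
        have ha2 := ha (n+2)
        have ha3 := ha (n+3)
        constructor
        · rw [hd]; nlinarith
        · rw [hd3, hd]; nlinarith

lemma one_le_cfDen (n : ℕ) : 1 ≤ cfDen a n := (cfDen_pos a ha n).1
lemma cfDen_mono (n : ℕ) : cfDen a n ≤ cfDen a (n + 1) := (cfDen_pos a ha n).2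

lemma cfDet : ∀ n, cfNum a (n+1) * cfDen a n - cfNum a n * cfDen a (n+1) = (-1)^n := by
  intro n
  induction n with
  | zero => show (a 1 * a 0 + 1) * 1 - a 0 * a 1 = 1; ring
  | succ n ih =>
      show cfNum a (n+2) * cfDen a (n+1) - cfNum a (n+1) * cfDen a (n+2) = (-1)^(n+1)
      have h1 : cfNum a (n+2) = a (n+2) * cfNum a (n+1) + cfNum a n := rfl
      have h2 : cfDen a (n+2) = a (n+2) * cfDen a (n+1) + cfDen a n := rfl
      rw [h1, h2, pow_succ]
      linear_combination (-1 : ℤ) * ih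
end

section
variable (a : ℕ → ℤ) (ha : ∀ i, 1 ≤ a i)

noncomputable def cfS (n : ℕ) : ℝ := (cfNum a n : ℝ) / (cfDen a n : ℝ)

include ha in
lemma cfS_diff (n : ℕ) :
    cfS a (n+1) - cfS a n = (-1)^n / ((cfDen a n : ℝ) * (cfDen a (n+1) : ℝ)) := by
  have h1 : (0:ℝ) < (cfDen a n : ℝ) := by exact_mod_cast one_le_cfDen a ha n
  have h2 : (0:ℝ) < (cfDen a (n+1) : ℝ) := by exact_mod_cast one_le_cfDen a ha (n+1)
  have hdet := cfDet a ha n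
  have hdet' : (cfNum a (n+1) : ℝ) * (cfDen a n : ℝ) - (cfNum a n : ℝ) * (cfDen a (n+1)) = (-1)^n := by
    exact_mod_cast hdet
  unfold cfS
  field_simp
  linear_combination hdet'

include ha in
lemma cfS_interval : ∀ n m, n ≤ m →
    cfS a m ∈ Set.Icc (min (cfS a n) (cfS a (n+1))) (max (cfS a n) (cfS a (n+1))) ∧
    cfS a (m+1) ∈ Set.Icc (min (cfS a n) (cfS a (n+1))) (max (cfS a n) (cfS a (n+1))) := by
  intro n m hm
  induction m with
  | zero =>
      have : n = 0 := by omega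
      subst this
      constructor <;> constructor
      · exact min_le_left _ _
      · exact le_max_left _ _
      · exact min_le_right _ _
      · exact le_max_right _ _
  | succ m ih =>
      rcases Nat.lt_or_ge n (m+1) with h | h
      · obtain ⟨ih1, ih2⟩ := ih (by omega)
        refine ⟨ih2, ?_⟩
        -- s (m+2) is between s m and s (m+1)
        have hq0 : (0:ℝ) < (cfDen a m : ℝ) := by exact_mod_cast one_le_cfDen a ha m
        have hq1 : (0:ℝ) < (cfDen a (m+1) : ℝ) := by exact_mod_cast one_le_cfDen a ha (m+1)
        have hq2 : (0:ℝ) < (cfDen a (m+2) : ℝ) := by exact_mod_cast one_le_cfDen a ha (m+2)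
        have hmono : (cfDen a m : ℝ) ≤ (cfDen a (m+2) : ℝ) := by
          exact_mod_cast (cfDen_mono a ha m).trans (cfDen_mono a ha (m+1))
        have d1 := cfS_diff a ha m
        have d2 : cfS a (m+2) - cfS a (m+1) =
            (-1)^(m+1) / ((cfDen a (m+1) : ℝ) * (cfDen a (m+2) : ℝ)) := cfS_diff a ha (m+1)
        have ht : (0:ℝ) < 1 / ((cfDen a m : ℝ) * (cfDen a (m+1) : ℝ)) := by positivity
        have ht2 : (0:ℝ) < 1 / ((cfDen a (m+1) : ℝ) * (cfDen a (m+2) : ℝ)) := by positivity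
        have hle : 1 / ((cfDen a (m+1) : ℝ) * (cfDen a (m+2) : ℝ)) ≤
            1 / ((cfDen a m : ℝ) * (cfDen a (m+1) : ℝ)) := by
          apply one_div_le_one_div_of_le
          · positivity
          · apply mul_le_mul hmono (le_refl _) (le_of_lt hq1) (le_of_lt hq2) |>.trans
            nlinarith
        have hbetween : cfS a (m+2) ∈ Set.Icc (min (cfS a m) (cfS a (m+1))) (max (cfS a m) (cfS a (m+1))) := by
          rcases Nat.even_or_odd m with he | ho
          · have e1 : ((-1:ℝ))^m = 1 := he.neg_one_pow
            have e2 : ((-1:ℝ))^(m+1) = -1 := by rw [pow_succ, e1]; ring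
            rw [e1] at d1; rw [e2] at d2; rw [neg_div] at d2
            constructor
            · refine le_trans (min_le_left _ _) ?_; linarith
            · refine le_trans ?_ (le_max_right _ _); linarith
          · have e1 : ((-1:ℝ))^m = -1 := ho.neg_one_pow
            have e2 : ((-1:ℝ))^(m+1) = 1 := by rw [pow_succ, e1]; ring
            rw [e1] at d1; rw [e2] at d2; rw [neg_div] at d1
            constructor
            · refine le_trans (min_le_right _ _) ?_; linarith
            · refine le_trans ?_ (le_max_left _ _); linarith
        -- now s m, s(m+1) ∈ Icc n-interval, and s(m+2) between them
        obtain ⟨l1, r1⟩ := ih1; obtain ⟨l2, r2⟩ := ih2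
        obtain ⟨lb, rb⟩ := hbetween
        constructor
        · refine le_trans ?_ lb; simp only [le_min_iff]; exact ⟨l1, l2⟩
        · refine le_trans rb ?_; simp only [max_le_iff]; exact ⟨r1, r2⟩
      · have : n = m + 1 := by omega
        subst this
        exact ⟨⟨min_le_left _ _, le_max_left _ _⟩, ⟨min_le_right _ _, le_max_right _ _⟩⟩

include ha in
lemma cf_sandwich {α : ℝ} (hα : Tendsto (cfS a) atTop (nhds α)) (n : ℕ) :
    |α - cfS a n| ≤ 1 / ((cfDen a n : ℝ) * (cfDen a (n+1) : ℝ)) := by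
  have hmem : α ∈ Set.Icc (min (cfS a n) (cfS a (n+1))) (max (cfS a n) (cfS a (n+1))) := by
    apply isClosed_Icc.mem_of_tendsto hα
    filter_upwards [eventually_ge_atTop n] with m hm
    exact (cfS_interval a ha n m hm).1
  obtain ⟨h1, h2⟩ := hmem
  have hd := cfS_diff a ha n
  have : |cfS a (n+1) - cfS a n| = 1 / ((cfDen a n : ℝ) * (cfDen a (n+1) : ℝ)) := by
    rw [hd, abs_div]
    congr 1
    · rcases Nat.even_or_odd n with he | ho
      · rw [he.neg_one_pow]; simp
      · rw [ho.neg_one_pow]; simp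
    · rw [abs_of_pos]
      have h1' : (0:ℝ) < (cfDen a n : ℝ) := by exact_mod_cast one_le_cfDen a ha n
      have h2' : (0:ℝ) < (cfDen a (n+1) : ℝ) := by exact_mod_cast one_le_cfDen a ha (n+1)
      positivity
  rw [abs_sub_le_iff]
  cases' le_total (cfS a n) (cfS a (n+1)) with hc hc
  · rw [min_eq_left hc] at h1; rw [max_eq_right hc] at h2
    constructor <;> nlinarith [abs_nonneg (cfS a (n+1) - cfS a n), le_abs_self (cfS a (n+1) - cfS a n), neg_abs_le (cfS a (n+1) - cfS a n), this]
  · rw [min_eq_right hc] at h1; rw [max_eq_left hc] at h2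
    constructor <;> nlinarith [le_abs_self (cfS a (n+1) - cfS a n), neg_abs_le (cfS a (n+1) - cfS a n), this]
end

lemma fib_cast_rec (n : ℕ) : (Nat.fib (n+2) : ℤ) = Nat.fib (n+1) + Nat.fib n := by
  rw [Nat.fib_add_two]; push_cast; ring

-- Cassini-type identity
lemma cassini (j : ℕ) :
    (fib (2*j+1) : ℤ)^2 + (fib (2*j+2) : ℤ) * (fib (2*j+1) : ℤ) - (fib (2*j+2) : ℤ)^2 = 1 := by
  induction j with
  | zero => norm_num [fib]
  | succ j ih =>
      have h1 : (fib (2*(j+1)+1) : ℤ) = fib (2*j+2) + fib (2*j+1) := by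
        have : 2*(j+1)+1 = (2*j+1) + 2 := by ring
        rw [this, Nat.fib_add_two]; push_cast; ring
      have h2 : (fib (2*(j+1)+2) : ℤ) = 2 * fib (2*j+2) + fib (2*j+1) := by
        have e1 : 2*(j+1)+2 = (2*j+2) + 2 := by ring
        have e2 : (2*j+2)+1 = (2*j+1) + 2 := by ring
        rw [e1, fib_cast_rec, e2, fib_cast_rec]
        ring
      rw [h1, h2]; linear_combination ih

section
variable (j : ℕ)

lemma aSeq_one_le (i : ℕ) : 1 ≤ aSeq (j+1) i := by
  unfold aSeq; split <;> norm_num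

lemma aSeq_eq_one {i : ℕ} (h : (i + 1) % (2*(j+1)) ≠ 0) : aSeq (j+1) i = 1 := by
  unfold aSeq; split
  · exact absurd ‹_› h
  · rfl

lemma aSeq_eq_two {i : ℕ} (h : (i + 1) % (2*(j+1)) = 0) : aSeq (j+1) i = 2 := by
  unfold aSeq; split
  · rfl
  · exact absurd h ‹_›

/-- run of ones lemma -/
lemma run_ones (g : ℕ → ℤ) (hg : ∀ i, g (i+2) = aSeq (j+1) (i+2) * g (i+1) + g i)
    (n jm : ℕ) (h1 : ∀ i, 1 ≤ i → i ≤ jm → aSeq (j+1) (n+1+i) = 1) :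
    ∀ i, i ≤ jm → g (n+1+i) = fib (i+1) * g (n+1) + fib i * g n := by
  intro i
  induction i using Nat.strong_induction_on with
  | _ i ih =>
    match i with
    | 0 => intro _; simp [fib]
    | 1 =>
        intro hle
        have ha := h1 1 (by omega) hle
        have : n + 1 + 1 = n + 2 := by ring
        rw [this]
        have hG := hg n
        rw [ha, one_mul] at hG
        rw [hG]
        have f2 : (fib 2 : ℤ) = 1 := by norm_num
        have f1 : (fib 1 : ℤ) = 1 := by norm_num
        rw [f1, f2]; ring
    | i + 2 =>
        intro hle
        have e1 := ih (i+1) (by omega) (by omega)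
        have e0 := ih i (by omega) (by omega)
        have harg : n + 1 + (i + 2) = (n + 1 + i) + 2 := by ring
        have hG := hg (n + 1 + i)
        have ha : aSeq (j+1) (n + 1 + i + 2) = 1 := by
          have := h1 (i+2) (by omega) hle
          have harg2 : n + 1 + (i + 2) = n + 1 + i + 2 := by ring
          rwa [harg2] at this
        rw [ha, one_mul] at hG
        rw [harg, hG]
        have e1' : g (n + 1 + i + 1) = fib (i+2) * g (n+1) + fib (i+1) * g n := by
          have : n + 1 + (i+1) = n + 1 + i + 1 := by ring
          rwa [this] at e1
        rw [e1', e0, fib_cast_rec (i+1), fib_cast_rec i]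
        push_cast
        ring
end

section basevals
variable (j : ℕ)

lemma hg_q : ∀ i, cfDen (aSeq (j+1)) (i+2)
    = aSeq (j+1) (i+2) * cfDen (aSeq (j+1)) (i+1) + cfDen (aSeq (j+1)) i := fun _ => rfl
lemma hg_p : ∀ i, cfNum (aSeq (j+1)) (i+2)
    = aSeq (j+1) (i+2) * cfNum (aSeq (j+1)) (i+1) + cfNum (aSeq (j+1)) i := fun _ => rfl

lemma fibZ2 : (fib (2*j+2) : ℤ) = fib (2*j+1) + fib (2*j) := fib_cast_rec (2*j)
lemma fibZ3 : (fib (2*j+3) : ℤ) = fib (2*j+2) + fib (2*j+1) := by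
  have := fib_cast_rec (2*j+1)
  rwa [show 2*j+1+2 = 2*j+3 from by omega, show 2*j+1+1 = 2*j+2 from by omega] at this
lemma fibZ4 : (fib (2*j+4) : ℤ) = fib (2*j+3) + fib (2*j+2) := by
  have := fib_cast_rec (2*j+2)
  rwa [show 2*j+2+2 = 2*j+4 from by omega, show 2*j+2+1 = 2*j+3 from by omega] at this
lemma fibZ5 : (fib (2*j+5) : ℤ) = fib (2*j+4) + fib (2*j+3) := by
  have := fib_cast_rec (2*j+3)
  rwa [show 2*j+3+2 = 2*j+5 from by omega, show 2*j+3+1 = 2*j+4 from by omega] at this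
lemma fibZ6 : (fib (2*j+6) : ℤ) = fib (2*j+5) + fib (2*j+4) := by
  have := fib_cast_rec (2*j+4)
  rwa [show 2*j+4+2 = 2*j+6 from by omega, show 2*j+4+1 = 2*j+5 from by omega] at this

lemma base_L1 :
    cfDen (aSeq (j+1)) (2*j) = fib (2*j+1) ∧
    cfDen (aSeq (j+1)) (2*j+1) = fib (2*j+3) ∧
    cfNum (aSeq (j+1)) (2*j) = fib (2*j+2) ∧
    cfNum (aSeq (j+1)) (2*j+1) = fib (2*j+4) := by
  cases j with
  | zero =>
      refine ⟨by norm_num [cfDen], ?_, ?_, ?_⟩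
      · show (aSeq 1 1 : ℤ) = (fib 3 : ℤ)
        rw [aSeq_eq_two 0 (by norm_num)]; norm_num
      · show (aSeq 1 0 : ℤ) = (fib 2 : ℤ)
        rw [aSeq_eq_one 0 (by norm_num)]; norm_num
      · show (aSeq 1 1 * aSeq 1 0 + 1 : ℤ) = (fib 4 : ℤ)
        rw [aSeq_eq_two 0 (by norm_num), aSeq_eq_one 0 (by norm_num)]; norm_num
  | succ j' =>
      have h2k : 2*((j'+1)+1) = 2*j'+4 := by omega
      have hones : ∀ i, 1 ≤ i → i ≤ 2*j'+1 → aSeq ((j'+1)+1) (0+1+i) = 1 := by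
        intro i hi1 hi2
        apply aSeq_eq_one
        rw [h2k, show (0+1+i+1) = i + 2 from by omega, Nat.mod_eq_of_lt (by omega)]
        omega
      have hq0 : cfDen (aSeq (j'+1+1)) 0 = 1 := rfl
      have hq1 : cfDen (aSeq (j'+1+1)) 1 = 1 := by
        show aSeq (j'+1+1) 1 = 1
        apply aSeq_eq_one; rw [h2k, Nat.mod_eq_of_lt (by omega)]; omega
      have hp0 : cfNum (aSeq (j'+1+1)) 0 = 1 := by
        show aSeq (j'+1+1) 0 = 1
        apply aSeq_eq_one; rw [h2k, Nat.mod_eq_of_lt (by omega)]; omega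
      have hp1 : cfNum (aSeq (j'+1+1)) 1 = 2 := by
        show aSeq (j'+1+1) 1 * aSeq (j'+1+1) 0 + 1 = 2
        rw [show aSeq (j'+1+1) 1 = 1 from hq1, show aSeq (j'+1+1) 0 = 1 from hp0]
        norm_num
      have runq := run_ones (j'+1) (cfDen (aSeq (j'+1+1))) (hg_q (j'+1)) 0 (2*j'+1) hones
      have runp := run_ones (j'+1) (cfNum (aSeq (j'+1+1))) (hg_p (j'+1)) 0 (2*j'+1) hones
      have eq2 : cfDen (aSeq (j'+1+1)) (2*j'+2) = fib (2*j'+3) := by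
        have e := runq (2*j'+1) le_rfl
        rw [show (0+1+(2*j'+1)) = 2*j'+2 from by omega, show (2*j'+1+1) = 2*j'+2 from by omega,
          show (0+1 : ℕ) = 1 from rfl, hq0, hq1] at e
        rw [e, fibZ3]; ring
      have eq1 : cfDen (aSeq (j'+1+1)) (2*j'+1) = fib (2*j'+2) := by
        have e := runq (2*j') (by omega)
        rw [show (0+1+(2*j')) = 2*j'+1 from by omega, show (2*j'+1) = 2*j'+1 from rfl,
          show (0+1 : ℕ) = 1 from rfl, hq0, hq1] at e
        rw [e, fibZ2]; ring
      have ep2 : cfNum (aSeq (j'+1+1)) (2*j'+2) = fib (2*j'+4) := by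
        have e := runp (2*j'+1) le_rfl
        rw [show (0+1+(2*j'+1)) = 2*j'+2 from by omega, show (2*j'+1+1) = 2*j'+2 from by omega,
          show (0+1 : ℕ) = 1 from rfl, hp0, hp1] at e
        rw [e, fibZ4, fibZ3]; ring
      have ep1 : cfNum (aSeq (j'+1+1)) (2*j'+1) = fib (2*j'+3) := by
        have e := runp (2*j') (by omega)
        rw [show (0+1+(2*j')) = 2*j'+1 from by omega,
          show (0+1 : ℕ) = 1 from rfl, hp0, hp1] at e
        rw [e, fibZ3, fibZ2]; ring
      have ha2 : aSeq (j'+1+1) (2*j'+3) = 2 := by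
        apply aSeq_eq_two
        rw [h2k, show (2*j'+3+1) = 2*j'+4 from by omega, Nat.mod_self]
      have hpivq : cfDen (aSeq (j'+1+1)) (2*j'+3) = fib (2*j'+5) := by
        have e := hg_q (j'+1) (2*j'+1)
        rw [show (2*j'+1+2) = 2*j'+3 from by omega, show (2*j'+1+1) = 2*j'+2 from by omega,
          ha2, eq2, eq1] at e
        rw [e, fibZ5, fibZ4]; ring
      have hpivp : cfNum (aSeq (j'+1+1)) (2*j'+3) = fib (2*j'+6) := by
        have e := hg_p (j'+1) (2*j'+1)
        rw [show (2*j'+1+2) = 2*j'+3 from by omega, show (2*j'+1+1) = 2*j'+2 from by omega,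
          ha2, ep2, ep1] at e
        rw [e, fibZ6, fibZ5]; ring
      refine ⟨?_, ?_, ?_, ?_⟩
      · rw [show (2*(j'+1)+1) = 2*j'+3 from by omega, show (2*(j'+1) : ℕ) = 2*j'+2 from by omega]
        exact eq2
      · rw [show (2*(j'+1)+3) = 2*j'+5 from by omega, show (2*(j'+1)+1 : ℕ) = 2*j'+3 from by omega]
        exact hpivq
      · rw [show (2*(j'+1)+2) = 2*j'+4 from by omega, show (2*(j'+1) : ℕ) = 2*j'+2 from by omega]
        exact ep2
      · rw [show (2*(j'+1)+4) = 2*j'+6 from by omega, show (2*(j'+1)+1 : ℕ) = 2*j'+3 from by omega]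
        exact hpivp
end basevals

section baseL2
variable (j : ℕ)

lemma base_vals :
    cfDen (aSeq (j+1)) (4*j+1) = fib (2*j+1) * fib (2*j+3) + fib (2*j) * fib (2*j+1) ∧
    cfDen (aSeq (j+1)) (4*j+2) = fib (2*j+2) * fib (2*j+3) + fib (2*j+1) * fib (2*j+1) ∧
    cfNum (aSeq (j+1)) (4*j+1) = fib (2*j+1) * fib (2*j+4) + fib (2*j) * fib (2*j+2) ∧
    cfNum (aSeq (j+1)) (4*j+2) = fib (2*j+2) * fib (2*j+4) + fib (2*j+1) * fib (2*j+2) := by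
  obtain ⟨hq0, hq1, hp0, hp1⟩ := base_L1 j
  have hones : ∀ i, 1 ≤ i → i ≤ 2*j+1 → aSeq (j+1) (2*j+1+i) = 1 := by
    intro i hi1 hi2
    apply aSeq_eq_one
    rw [show (2*j+1+i+1) = (2*(j+1)) + i from by omega, Nat.add_mod_left]
    rw [Nat.mod_eq_of_lt (by omega)]
    omega
  have runq := run_ones j (cfDen (aSeq (j+1))) (hg_q j) (2*j) (2*j+1) ?_
  have runp := run_ones j (cfNum (aSeq (j+1))) (hg_p j) (2*j) (2*j+1) ?_
  · refine ⟨?_, ?_, ?_, ?_⟩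
    · have e := runq (2*j) (by omega)
      rw [show (2*j+1+(2*j)) = 4*j+1 from by omega] at e
      rw [e, hq0, hq1]
    · have e := runq (2*j+1) le_rfl
      rw [show (2*j+1+(2*j+1)) = 4*j+2 from by omega, show (2*j+1+1) = 2*j+2 from by omega] at e
      rw [e, hq0, hq1]
    · have e := runp (2*j) (by omega)
      rw [show (2*j+1+(2*j)) = 4*j+1 from by omega] at e
      rw [e, hp0, hp1]
    · have e := runp (2*j+1) le_rfl
      rw [show (2*j+1+(2*j+1)) = 4*j+2 from by omega, show (2*j+1+1) = 2*j+2 from by omega] at e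
      rw [e, hp0, hp1]
  · intro i hi1 hi2
    have := hones i hi1 hi2
    rwa [show (2*j+1+i) = 2*j+1+i from rfl] at this
  · exact fun i hi1 hi2 => hones i hi1 hi2

/-- period step lemma -/
lemma period_step (n : ℕ) (h : (n+3) % (2*(j+1)) = 0) :
    cfDen (aSeq (j+1)) (n+(2*j+2)) = fib (2*j+3) * cfDen (aSeq (j+1)) (n+1)
        + fib (2*j+1) * cfDen (aSeq (j+1)) n ∧
    cfDen (aSeq (j+1)) (n+(2*j+3)) = fib (2*j+4) * cfDen (aSeq (j+1)) (n+1)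
        + fib (2*j+2) * cfDen (aSeq (j+1)) n ∧
    cfNum (aSeq (j+1)) (n+(2*j+2)) = fib (2*j+3) * cfNum (aSeq (j+1)) (n+1)
        + fib (2*j+1) * cfNum (aSeq (j+1)) n ∧
    cfNum (aSeq (j+1)) (n+(2*j+3)) = fib (2*j+4) * cfNum (aSeq (j+1)) (n+1)
        + fib (2*j+2) * cfNum (aSeq (j+1)) n := by
  have ha2 : aSeq (j+1) (n+2) = 2 := by
    apply aSeq_eq_two; rwa [show (n+2+1) = n+3 from by omega]
  have hones : ∀ i, 1 ≤ i → i ≤ 2*j+1 → aSeq (j+1) (n+1+1+i) = 1 := by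
    intro i hi1 hi2
    apply aSeq_eq_one
    rw [show (n+1+1+i+1) = (n+3) + i from by omega, Nat.add_mod, h, Nat.zero_add, Nat.mod_mod_of_dvd i (dvd_refl _),
      Nat.mod_eq_of_lt (by omega)]
    omega
  have runq := run_ones j (cfDen (aSeq (j+1))) (hg_q j) (n+1) (2*j+1) hones
  have runp := run_ones j (cfNum (aSeq (j+1))) (hg_p j) (n+1) (2*j+1) hones
  have hqrec : cfDen (aSeq (j+1)) (n+2) = 2 * cfDen (aSeq (j+1)) (n+1) + cfDen (aSeq (j+1)) n := by
    have := hg_q j n; rwa [ha2] at this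
  have hprec : cfNum (aSeq (j+1)) (n+2) = 2 * cfNum (aSeq (j+1)) (n+1) + cfNum (aSeq (j+1)) n := by
    have := hg_p j n; rwa [ha2] at this
  refine ⟨?_, ?_, ?_, ?_⟩
  · have e := runq (2*j) (by omega)
    rw [show (n+1+1+(2*j)) = n+(2*j+2) from by omega, show (n+1+1) = n+2 from by omega, hqrec] at e
    rw [e, fibZ3, fibZ2]; ring
  · have e := runq (2*j+1) le_rfl
    rw [show (n+1+1+(2*j+1)) = n+(2*j+3) from by omega, show (n+1+1) = n+2 from by omega,
      show (2*j+1+1) = 2*j+2 from by omega, hqrec] at e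
    rw [e, fibZ4, fibZ3]; ring
  · have e := runp (2*j) (by omega)
    rw [show (n+1+1+(2*j)) = n+(2*j+2) from by omega, show (n+1+1) = n+2 from by omega, hprec] at e
    rw [e, fibZ3, fibZ2]; ring
  · have e := runp (2*j+1) le_rfl
    rw [show (n+1+1+(2*j+1)) = n+(2*j+3) from by omega, show (n+1+1) = n+2 from by omega,
      show (2*j+1+1) = 2*j+2 from by omega, hprec] at e
    rw [e, fibZ4, fibZ3]; ring
end baseL2

section invariant
variable (j : ℕ)

lemma q_one_le (n : ℕ) : 1 ≤ cfDen (aSeq (j+1)) n :=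
  one_le_cfDen _ (aSeq_one_le j) n
lemma q_mono' (n : ℕ) : cfDen (aSeq (j+1)) n ≤ cfDen (aSeq (j+1)) (n+1) :=
  cfDen_mono _ (aSeq_one_le j) n

lemma invariant : ∀ m, 2 ≤ m →
    ((fib (2*j+2) : ℤ) + fib (2*j+1)) * cfNum (aSeq (j+1)) (2*(j+1)*m-3)^2
      - 2*(fib (2*j+2):ℤ)*cfNum (aSeq (j+1)) (2*(j+1)*m-3)*cfDen (aSeq (j+1)) (2*(j+1)*m-3)
      - (fib (2*j+2):ℤ)*cfDen (aSeq (j+1)) (2*(j+1)*m-3)^2 = (fib (2*j+2):ℤ) + fib (2*j+1) ∧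
    ((fib (2*j+2) : ℤ) + fib (2*j+1)) * cfNum (aSeq (j+1)) (2*(j+1)*m-3) * cfNum (aSeq (j+1)) (2*(j+1)*m-3+1)
      - (fib (2*j+2):ℤ)*(cfNum (aSeq (j+1)) (2*(j+1)*m-3)*cfDen (aSeq (j+1)) (2*(j+1)*m-3+1)
          + cfNum (aSeq (j+1)) (2*(j+1)*m-3+1)*cfDen (aSeq (j+1)) (2*(j+1)*m-3))
      - (fib (2*j+2):ℤ)*cfDen (aSeq (j+1)) (2*(j+1)*m-3)*cfDen (aSeq (j+1)) (2*(j+1)*m-3+1)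
      = (fib (2*j+2):ℤ) ∧
    ((fib (2*j+2) : ℤ) + fib (2*j+1)) * cfNum (aSeq (j+1)) (2*(j+1)*m-3+1)^2
      - 2*(fib (2*j+2):ℤ)*cfNum (aSeq (j+1)) (2*(j+1)*m-3+1)*cfDen (aSeq (j+1)) (2*(j+1)*m-3+1)
      - (fib (2*j+2):ℤ)*cfDen (aSeq (j+1)) (2*(j+1)*m-3+1)^2 = -(fib (2*j+2):ℤ) ∧
    (m:ℤ) ≤ cfDen (aSeq (j+1)) (2*(j+1)*m-3) := by
  intro m hm
  induction m, hm using Nat.le_induction with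
  | base =>
      obtain ⟨hq0, hq1, hp0, hp1⟩ := base_vals j
      have hidx : 2*(j+1)*2-3 = 4*j+1 := by omega
      have hidx1 : 2*(j+1)*2-3+1 = 4*j+2 := by omega
      rw [hidx1, hidx, hq0, hq1, hp0, hp1]
      have hfe : (fib (2*j) : ℤ) = fib (2*j+2) - fib (2*j+1) := by
        linear_combination (-1 : ℤ) * fibZ2 j
      have hfb : (fib (2*j+3) : ℤ) = fib (2*j+2) + fib (2*j+1) := fibZ3 j
      have hfA : (fib (2*j+4) : ℤ) = 2*fib (2*j+2) + fib (2*j+1) := by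
        linear_combination fibZ4 j + fibZ3 j
      rw [hfe, hfb, hfA]
      have hcas := cassini j
      have hd1 : (1:ℤ) ≤ fib (2*j+1) := by exact_mod_cast Nat.fib_pos.mpr (by omega)
      have hc1 : (1:ℤ) ≤ fib (2*j+2) := by exact_mod_cast Nat.fib_pos.mpr (by omega)
      have hdc : (fib (2*j+1):ℤ) ≤ fib (2*j+2) := by
        exact_mod_cast Nat.fib_le_fib_succ (n := 2*j+1)
      refine ⟨?_, ?_, ?_, ?_⟩
      · linear_combination ((fib (2*j+1):ℤ)^3 + 2*(fib (2*j+2):ℤ)*(fib (2*j+1):ℤ)^2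
          + (fib (2*j+1):ℤ) - (fib (2*j+2):ℤ)^3 + (fib (2*j+2):ℤ)) * hcas
      · linear_combination ((fib (2*j+2):ℤ)*(fib (2*j+1):ℤ)^2 + (fib (2*j+2):ℤ)^2*(fib (2*j+1):ℤ)
          - (fib (2*j+2):ℤ)^3 + (fib (2*j+2):ℤ)) * hcas
      · linear_combination (-(fib (2*j+2):ℤ)*(fib (2*j+1):ℤ)^2 - (fib (2*j+2):ℤ)^2*(fib (2*j+1):ℤ)
          + (fib (2*j+2):ℤ)^3 - (fib (2*j+2):ℤ)) * hcas
      · have hcd : (1:ℤ) ≤ (fib (2*j+2):ℤ) * (fib (2*j+1):ℤ) := by nlinarith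
        have hr : (fib (2*j+1):ℤ) * ((fib (2*j+2):ℤ) + fib (2*j+1))
            + ((fib (2*j+2):ℤ) - fib (2*j+1)) * fib (2*j+1)
            = 2*((fib (2*j+2):ℤ)*(fib (2*j+1):ℤ)) := by ring
        push_cast
        linarith [hcd, hr]
  | succ m hm ih =>
      obtain ⟨hX, hY, hZ, hgrow⟩ := ih
      set n := 2*(j+1)*m-3 with hn
      have hge : 4 ≤ 2*(j+1)*m := by
        calc 4 = 2*1*2 := rfl
        _ ≤ 2*(j+1)*m := Nat.mul_le_mul (Nat.mul_le_mul le_rfl (by omega)) hm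
      have hexp : 2*(j+1)*(m+1) = 2*(j+1)*m + (2*j+2) := by ring
      have hmod : (n+3) % (2*(j+1)) = 0 := by
        rw [show n+3 = 2*(j+1)*m from by omega]
        exact Nat.mul_mod_right _ _
      obtain ⟨s1, s2, s3, s4⟩ := period_step j n hmod
      have hidx : 2*(j+1)*(m+1)-3 = n+(2*j+2) := by omega
      have hidx1 : 2*(j+1)*(m+1)-3+1 = n+(2*j+3) := by omega
      rw [hidx1, hidx, s1, s2, s3, s4]
      have hfb : (fib (2*j+3) : ℤ) = fib (2*j+2) + fib (2*j+1) := fibZ3 j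
      have hfA : (fib (2*j+4) : ℤ) = 2*fib (2*j+2) + fib (2*j+1) := by
        linear_combination fibZ4 j + fibZ3 j
      rw [hfb, hfA]
      have hcas := cassini j
      have hd1 : (1:ℤ) ≤ fib (2*j+1) := by exact_mod_cast Nat.fib_pos.mpr (by omega)
      have hc1 : (1:ℤ) ≤ fib (2*j+2) := by exact_mod_cast Nat.fib_pos.mpr (by omega)
      have hqm : cfDen (aSeq (j+1)) n ≤ cfDen (aSeq (j+1)) (n+1) := q_mono' j n
      have hq1' : (1:ℤ) ≤ cfDen (aSeq (j+1)) n := q_one_le j n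
      refine ⟨?_, ?_, ?_, ?_⟩
      · linear_combination (((fib (2*j+2):ℤ)+fib (2*j+1))^2) * hZ
          + (2*((fib (2*j+2):ℤ)+fib (2*j+1))*(fib (2*j+1):ℤ)) * hY
          + ((fib (2*j+1):ℤ)^2) * hX + (((fib (2*j+2):ℤ)+fib (2*j+1))) * hcas
      · linear_combination ((2*(fib (2*j+2):ℤ)+fib (2*j+1))*((fib (2*j+2):ℤ)+fib (2*j+1))) * hZ
          + (((fib (2*j+2):ℤ)+fib (2*j+1))*(fib (2*j+2):ℤ)
              + (2*(fib (2*j+2):ℤ)+fib (2*j+1))*(fib (2*j+1):ℤ)) * hY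
          + ((fib (2*j+2):ℤ)*(fib (2*j+1):ℤ)) * hX + ((fib (2*j+2):ℤ)) * hcas
      · linear_combination ((2*(fib (2*j+2):ℤ)+fib (2*j+1))^2) * hZ
          + (2*(2*(fib (2*j+2):ℤ)+fib (2*j+1))*(fib (2*j+2):ℤ)) * hY
          + ((fib (2*j+2):ℤ)^2) * hX + (-(fib (2*j+2):ℤ)) * hcas
      · have hQ1 : (1:ℤ) ≤ cfDen (aSeq (j+1)) (n+1) := q_one_le j (n+1)
        have hf1 : (1:ℤ) ≤ fib (2*j+1) := by exact_mod_cast Nat.fib_pos.mpr (by omega)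
        have hf2 : (1:ℤ) ≤ fib (2*j+2) := by exact_mod_cast Nat.fib_pos.mpr (by omega)
        have t1 : 1 * cfDen (aSeq (j+1)) (n+1) ≤
            ((fib (2*j+2):ℤ) + fib (2*j+1)) * cfDen (aSeq (j+1)) (n+1) :=
          mul_le_mul_of_nonneg_right (by linarith) (by linarith)
        have t2 : 1 * cfDen (aSeq (j+1)) n ≤ (fib (2*j+1):ℤ) * cfDen (aSeq (j+1)) n :=
          mul_le_mul_of_nonneg_right (by linarith) (by linarith)
        push_cast
        linarith
end invariant


section alphaquad
variable (j : ℕ)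

lemma a0_eq_one : aSeq (j+1) 0 = 1 := by
  apply aSeq_eq_one
  rw [Nat.mod_eq_of_lt (by omega)]
  omega

lemma alpha_bounds {α : ℝ} (ht : Filter.Tendsto (cfS (aSeq (j+1))) Filter.atTop (nhds α)) :
    0 ≤ α ∧ α ≤ 2 := by
  have ha := aSeq_one_le j
  have hb := cf_sandwich (aSeq (j+1)) ha ht 0
  have hp0 : cfNum (aSeq (j+1)) 0 = 1 := a0_eq_one j
  have hq0 : cfDen (aSeq (j+1)) 0 = 1 := rfl
  have hq1 : (1:ℤ) ≤ cfDen (aSeq (j+1)) 1 := one_le_cfDen _ ha 1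
  have hq1' : (1:ℝ) ≤ (cfDen (aSeq (j+1)) 1 : ℝ) := by exact_mod_cast hq1
  have hs0 : cfS (aSeq (j+1)) 0 = 1 := by
    unfold cfS; rw [hp0, hq0]; norm_num
  rw [hs0, hq0] at hb
  have h1 : 1 / ((1:ℤ):ℝ) / 1 ≤ 1 := by norm_num
  have hble : |α - 1| ≤ 1 := by
    refine le_trans hb ?_
    rw [div_le_one (by positivity)]
    push_cast
    nlinarith
  rw [abs_le] at hble
  constructor <;> linarith [hble.1, hble.2]

lemma theta_bound {α : ℝ} (ht : Filter.Tendsto (cfS (aSeq (j+1))) Filter.atTop (nhds α)) (n : ℕ) :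
    |(cfDen (aSeq (j+1)) n : ℝ) * α - (cfNum (aSeq (j+1)) n : ℝ)|
      ≤ 1 / (cfDen (aSeq (j+1)) (n+1) : ℝ) := by
  have ha := aSeq_one_le j
  have hb := cf_sandwich (aSeq (j+1)) ha ht n
  have hq : (0:ℝ) < (cfDen (aSeq (j+1)) n : ℝ) := by
    exact_mod_cast one_le_cfDen _ ha n |>.trans_lt' (by norm_num)
  have hq' : (0:ℝ) < (cfDen (aSeq (j+1)) (n+1) : ℝ) := by
    exact_mod_cast one_le_cfDen _ ha (n+1) |>.trans_lt' (by norm_num)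
  have : (cfDen (aSeq (j+1)) n : ℝ) * α - (cfNum (aSeq (j+1)) n : ℝ)
      = (cfDen (aSeq (j+1)) n : ℝ) * (α - cfS (aSeq (j+1)) n) := by
    unfold cfS; field_simp
  rw [this, abs_mul, abs_of_pos hq]
  calc (cfDen (aSeq (j+1)) n : ℝ) * |α - cfS (aSeq (j+1)) n|
      ≤ (cfDen (aSeq (j+1)) n : ℝ) * (1 / ((cfDen (aSeq (j+1)) n : ℝ) * (cfDen (aSeq (j+1)) (n+1) : ℝ))) :=
        mul_le_mul_of_nonneg_left hb (le_of_lt hq)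
    _ = 1 / (cfDen (aSeq (j+1)) (n+1) : ℝ) := by field_simp

set_option maxHeartbeats 1000000 in
lemma alpha_quad {α : ℝ} (ht : Filter.Tendsto (cfS (aSeq (j+1))) Filter.atTop (nhds α)) :
    ((fib (2*j+2) : ℝ) + (fib (2*j+1) : ℝ)) * α^2
      = 2*(fib (2*j+2) : ℝ)*α + (fib (2*j+2) : ℝ) := by
  have ha := aSeq_one_le j
  obtain ⟨hα0, hα2⟩ := alpha_bounds j ht
  set c : ℝ := (fib (2*j+2) : ℝ) with hc
  set d : ℝ := (fib (2*j+1) : ℝ) with hd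
  have hc1 : (1:ℝ) ≤ c := by
    rw [hc]; exact_mod_cast Nat.one_le_iff_ne_zero.mpr (Nat.fib_pos.mpr (by omega)).ne'
  have hd1 : (1:ℝ) ≤ d := by
    rw [hd]; exact_mod_cast Nat.one_le_iff_ne_zero.mpr (Nat.fib_pos.mpr (by omega)).ne'
  set Δ : ℝ := (c + d) * α^2 - 2*c*α - c with hΔ
  have hKbound : ∀ m : ℕ, 2 ≤ m → (m:ℝ)^2 * |Δ| ≤ 6*(c+d) + 2*c := by
    intro m hm
    obtain ⟨hX, _, _, hgrow⟩ := invariant j m hm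
    obtain ⟨p, hp⟩ : ∃ x : ℝ, x = (cfNum (aSeq (j+1)) (2*(j+1)*m-3) : ℝ) := ⟨_, rfl⟩
    obtain ⟨q, hq⟩ : ∃ x : ℝ, x = (cfDen (aSeq (j+1)) (2*(j+1)*m-3) : ℝ) := ⟨_, rfl⟩
    obtain ⟨Q, hQ⟩ : ∃ x : ℝ, x = (cfDen (aSeq (j+1)) (2*(j+1)*m-3+1) : ℝ) := ⟨_, rfl⟩
    have hXr : (c+d)*p^2 - 2*c*p*q - c*q^2 = c + d := by
      rw [hp, hq, hc, hd]; exact_mod_cast hX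
    have hq1 : (1:ℝ) ≤ q := by rw [hq]; exact_mod_cast one_le_cfDen _ ha _
    have hQ1 : (1:ℝ) ≤ Q := by rw [hQ]; exact_mod_cast one_le_cfDen _ ha _
    have hqQ : q ≤ Q := by rw [hq, hQ]; exact_mod_cast cfDen_mono _ ha _
    have hmq : (m:ℝ) ≤ q := by rw [hq]; exact_mod_cast hgrow
    set θ : ℝ := q * α - p with hθ
    have hθb : |θ| ≤ 1/Q := by
      rw [hθ, hp, hq, hQ]; exact theta_bound j ht _
    have hθ1 : |θ| ≤ 1 := le_trans hθb (by rw [div_le_one (by linarith)]; linarith)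
    have hqθ : |q * θ| ≤ 1 := by
      rw [abs_mul, abs_of_pos (by linarith : (0:ℝ) < q)]
      calc q * |θ| ≤ q * (1/Q) := mul_le_mul_of_nonneg_left hθb (by linarith)
        _ ≤ Q * (1/Q) := by
            apply mul_le_mul_of_nonneg_right hqQ
            positivity
        _ = 1 := by field_simp
    have hkey : q^2 * Δ = (c+d) + 2*(q*θ)*((c+d)*α - c) - (c+d)*θ^2 := by
      have hpe : p = q*α - θ := by rw [hθ]; ring
      rw [hpe] at hXr
      rw [hΔ]
      linear_combination hXr
    have habs : |q^2 * Δ| ≤ 6*(c+d) + 2*c := by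
      rw [hkey]
      have h1 : |(c+d) + 2*(q*θ)*((c+d)*α - c) - (c+d)*θ^2|
          ≤ |(c+d)| + |2*(q*θ)*((c+d)*α - c)| + |(c+d)*θ^2| := by
        calc |(c+d) + 2*(q*θ)*((c+d)*α - c) - (c+d)*θ^2|
            ≤ |(c+d) + 2*(q*θ)*((c+d)*α - c)| + |(c+d)*θ^2| := abs_sub _ _
          _ ≤ |(c+d)| + |2*(q*θ)*((c+d)*α - c)| + |(c+d)*θ^2| := by
              have := abs_add_le (c+d) (2*(q*θ)*((c+d)*α - c))
              linarith
      refine le_trans h1 ?_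
      have e1 : |(c+d)| = c + d := abs_of_pos (by linarith)
      have e2 : |2*(q*θ)*((c+d)*α - c)| ≤ 2 * (2*(c+d) + c) := by
        rw [abs_mul, abs_mul, abs_two]
        have hb1 : |(c+d)*α - c| ≤ 2*(c+d) + c := by
          rw [abs_sub_comm]
          refine le_trans (abs_sub _ _) ?_
          rw [abs_of_pos (by linarith : (0:ℝ) < c), abs_mul,
            abs_of_pos (by linarith : (0:ℝ) < c+d), abs_of_nonneg hα0]
          nlinarith
        calc 2 * |q*θ| * |(c+d)*α - c| ≤ 2 * 1 * (2*(c+d) + c) := by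
              apply mul_le_mul _ hb1 (abs_nonneg _) (by norm_num)
              nlinarith [hqθ]
          _ = 2 * (2*(c+d) + c) := by ring
      have e3 : |(c+d)*θ^2| ≤ c + d := by
        rw [abs_mul, abs_of_pos (by linarith : (0:ℝ) < c+d), abs_of_nonneg (sq_nonneg θ)]
        have hθsq : θ^2 ≤ 1 := by nlinarith [sq_abs θ, hθ1, abs_nonneg θ]
        nlinarith [hθsq]
      linarith
    have hmono : (m:ℝ)^2 * |Δ| ≤ q^2 * |Δ| := by
      apply mul_le_mul_of_nonneg_right _ (abs_nonneg _)
      have hm0 : (0:ℝ) ≤ (m:ℝ) := by positivity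
      nlinarith
    calc (m:ℝ)^2 * |Δ| ≤ q^2 * |Δ| := hmono
      _ = |q^2 * Δ| := by rw [abs_mul, abs_of_nonneg (by positivity : (0:ℝ) ≤ q^2)]
      _ ≤ 6*(c+d) + 2*c := habs
  have hΔ0 : Δ = 0 := by
    by_contra hne
    have hpos : 0 < |Δ| := abs_pos.mpr hne
    obtain ⟨M, hM⟩ := exists_nat_gt ((6*(c+d) + 2*c)/|Δ|)
    have h1 := hKbound (M+2) (by omega)
    have h2 : ((M:ℝ)+2) > (6*(c+d) + 2*c)/|Δ| := by push_cast; linarith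
    have h3 : (6*(c+d) + 2*c) < ((M:ℝ)+2) * |Δ| := by
      rw [gt_iff_lt, div_lt_iff₀ hpos] at h2; linarith
    have h4 : ((M:ℝ)+2) * |Δ| ≤ ((M:ℝ)+2)^2 * |Δ| := by
      nlinarith [abs_nonneg Δ]
    push_cast at h1
    linarith
  rw [hΔ] at hΔ0
  linarith [hΔ0]
end alphaquad

lemma round_eq_of_close (x : ℝ) (p : ℤ) (h : |x - p| < 1/2) : round x = p := by
  rw [round_eq, Int.floor_eq_iff]
  rw [abs_lt] at h
  constructor
  · push_cast; linarith [h.1]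
  · push_cast; linarith [h.2]

lemma key_algebra (b c α p q P Q : ℝ)
    (hq : b*α^2 = 2*c*α + c)
    (hX : b*p^2 - 2*c*p*q - c*q^2 = b)
    (hY : b*p*P - c*(p*Q + P*q) - c*q*Q = c)
    (hdet : P*q - p*Q = -1)
    (hW : b*α - c ≠ 0) :
    (q*α - p)^2 + (2*α+2)*(q*α-p)*Q + (2*α+1) = 0 := by
  set E := q*α - p with hE
  set E' := Q*α - P with hE'
  set fb := (2*c - b*α)*q - b*p with hfb
  set FB := (2*c - b*α)*Q - b*P with hFB
  have hEfb : E * fb = b := by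
    rw [hE, hfb]; linear_combination (-(q:ℝ)^2) * hq + hX
  have h1 : E*FB + E'*fb = 2*c := by
    rw [hE, hE', hfb, hFB]; linear_combination (-2*q*Q) * hq + 2*hY
  have h2 : E'*fb - E*FB = 2*c - 2*b*α := by
    rw [hE, hE', hfb, hFB]; linear_combination (2*(b*α - c)) * hdet
  have hEFB : E*FB = b*α := by linarith
  have hE'fb : E'*fb = 2*c - b*α := by linarith
  have hbE' : b * E' = (2*c - b*α) * E := by
    linear_combination E * hE'fb - E' * hEfb
  have keymul : 2*(b*α - c) * (E^2 + (2*α+2)*E*Q + (2*α+1)) = 0 := by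
    have hQrel : 2*(b*α - c)*Q = b*E' - FB := by rw [hE', hFB]; ring
    linear_combination ((2*α+2)*E) * hQrel + ((2*α+2)*E) * hbE' - (2*α+2) * hEFB
      + (-2*E^2 + 2) * hq
  have h2W : (2:ℝ)*(b*α - c) ≠ 0 := by
    intro h; apply hW; linarith
  rcases mul_eq_zero.mp keymul with h | h
  · exact absurd h h2W
  · exact h

lemma final_step (α E Q : ℝ) (hα0 : 0 ≤ α) (hα2 : α ≤ 2)
    (key : E^2 + (2*α+2)*E*Q + (2*α+1) = 0)
    (hEneg : E < 0) (hEb : -E ≤ 1/Q) (hQ3 : 3 ≤ Q) :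
    Q * (-E) = gFun α Q ∧ Dk α < Q * (-E) := by
  have hQ0 : 0 < Q := by linarith
  have h2α2 : (0:ℝ) < 2*α+2 := by linarith
  obtain ⟨D, hDval⟩ : ∃ D', D' = Dk α := ⟨_, rfl⟩
  have hDeq : D = (2*α+1)/(2*α+2) := hDval
  have hD0 : 0 < D := by rw [hDeq]; positivity
  have hD1 : D < 1 := by
    rw [hDeq, div_lt_one h2α2]; linarith
  have e1 : (2*α+2) * (1 - D) = 1 := by
    rw [hDeq]; field_simp; ring
  have e2 : (2*α+2) * D = 2*α+1 := by
    rw [hDeq]; field_simp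
  set u := Q * (-E) with hu
  have hu0 : 0 < u := mul_pos hQ0 (neg_pos.mpr hEneg)
  have hu1 : u ≤ 1 := by
    rw [hu]
    calc Q * (-E) ≤ Q * (1/Q) := by
          exact mul_le_mul_of_nonneg_left hEb (le_of_lt hQ0)
    _ = 1 := by field_simp
  have hu2 : u*Q^2 - (1-D)*u^2 = D*Q^2 := by
    have hkey' : (E^2 + (2*α+2)*E*Q + (2*α+1)) * Q^2 = 0 := by rw [key]; ring
    have h3 : (2*α+2)*(u*Q^2 - (1-D)*u^2 - D*Q^2) = 0 := by
      rw [hu]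
      linear_combination (-1 : ℝ) * hkey' + (-(Q*(-E))^2) * e1 + (-Q^2) * e2
    rcases mul_eq_zero.mp h3 with h | h
    · linarith
    · linarith
  set s := Q^2 - 2*(1-D)*u with hs
  have hs0 : 0 < s := by
    rw [hs]; nlinarith
  have hsq : Q^4 - 4*D*(1-D)*Q^2 = s^2 := by
    rw [hs]; linear_combination (4*(1-D)) * hu2
  have hsqrt : Real.sqrt (1 - 4*D*(1-D)/Q^2) = s/Q^2 := by
    have hQ2 : (0:ℝ) < Q^2 := by positivity
    have harg : 1 - 4*D*(1-D)/Q^2 = (s/Q^2)^2 := by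
      rw [div_pow, ← hsq, eq_div_iff (by positivity)]
      field_simp
    rw [harg, Real.sqrt_sq (by positivity)]
  have hgf : gFun α Q = 2*D/(1 + s/Q^2) := by
    rw [gFun, ← hDval, hsqrt]
  have hden : 0 < 1 + s/Q^2 := by positivity
  have hQ2 : (0:ℝ) < Q^2 := by positivity
  constructor
  · rw [hgf, eq_div_iff (ne_of_gt hden)]
    rw [hs]
    have expand : u * (1 + (Q^2 - 2*(1-D)*u)/Q^2) = (u*Q^2 + u*Q^2 - 2*(1-D)*u^2)/Q^2 := by
      field_simp; ring
    rw [expand, div_eq_iff (ne_of_gt hQ2)]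
    linear_combination 2*hu2
  · have hslt : s < Q^2 := by rw [hs]; nlinarith
    have h2D : 2*D*Q^2 = u*(Q^2 + s) := by rw [hs]; linear_combination (-2)*hu2
    nlinarith

/-- Let `k ≥ 1` and `q_n` the denominators of the convergents of
`α_k = [overline{1_{2k−1}, 2}]`. For all sufficiently large `m`, with `n = 2km − 3`,
one has `q_{n+1}·‖q_n·α_k‖ = g_k(q_{n+1})`; in particular `q_{n+1}·‖q_n·α_k‖ > D_k`. -/
theorem dirichlet_discrete_stmt15 (k : ℕ) (hk : 1 ≤ k) (αk : ℝ)
    (hαk : IsCFExp (aSeq k) αk) :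
    ∀ᶠ m : ℕ in atTop,
      (cfDen (aSeq k) (2 * k * m - 3 + 1) : ℝ) *
          intDist ((cfDen (aSeq k) (2 * k * m - 3) : ℝ) * αk) =
        gFun αk (cfDen (aSeq k) (2 * k * m - 3 + 1)) ∧
      Dk αk < (cfDen (aSeq k) (2 * k * m - 3 + 1) : ℝ) *
          intDist ((cfDen (aSeq k) (2 * k * m - 3) : ℝ) * αk) := by
  obtain ⟨j, rfl⟩ : ∃ j, k = j + 1 := ⟨k - 1, by omega⟩
  have ha := aSeq_one_le j
  have htend : Filter.Tendsto (cfS (aSeq (j+1))) Filter.atTop (nhds αk) := by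
    have heq : (fun n => cfVal (cfList (aSeq (j+1)) n)) = cfS (aSeq (j+1)) :=
      funext fun n => cfVal_cfList_eq _ ha n
    rw [← heq]
    exact hαk
  obtain ⟨hα0, hα2⟩ := alpha_bounds j htend
  have hquad := alpha_quad j htend
  filter_upwards [Filter.eventually_ge_atTop 3] with m hm3
  have hm2 : 2 ≤ m := by omega
  obtain ⟨hX, hY, hZ, hgrow⟩ := invariant j m hm2
  have hge : 4 ≤ 2*(j+1)*m := by
    calc 4 = 2*1*2 := rfl
    _ ≤ 2*(j+1)*m := Nat.mul_le_mul (Nat.mul_le_mul le_rfl (by omega)) (by omega)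
  obtain ⟨c, hc⟩ : ∃ x : ℝ, x = (fib (2*j+2) : ℝ) := ⟨_, rfl⟩
  obtain ⟨d, hd⟩ : ∃ x : ℝ, x = (fib (2*j+1) : ℝ) := ⟨_, rfl⟩
  have hc1 : (1:ℝ) ≤ c := by
    rw [hc]; exact_mod_cast Nat.one_le_iff_ne_zero.mpr (Nat.fib_pos.mpr (by omega)).ne'
  have hd1 : (1:ℝ) ≤ d := by
    rw [hd]; exact_mod_cast Nat.one_le_iff_ne_zero.mpr (Nat.fib_pos.mpr (by omega)).ne'
  obtain ⟨p, hp⟩ : ∃ x : ℝ, x = (cfNum (aSeq (j+1)) (2*(j+1)*m-3) : ℝ) := ⟨_, rfl⟩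
  obtain ⟨P, hP⟩ : ∃ x : ℝ, x = (cfNum (aSeq (j+1)) (2*(j+1)*m-3+1) : ℝ) := ⟨_, rfl⟩
  obtain ⟨q, hq⟩ : ∃ x : ℝ, x = (cfDen (aSeq (j+1)) (2*(j+1)*m-3) : ℝ) := ⟨_, rfl⟩
  obtain ⟨Q, hQ⟩ : ∃ x : ℝ, x = (cfDen (aSeq (j+1)) (2*(j+1)*m-3+1) : ℝ) := ⟨_, rfl⟩
  have hquad' : (c+d)*αk^2 = 2*c*αk + c := by rw [hc, hd]; exact hquad
  have hXr : (c+d)*p^2 - 2*c*p*q - c*q^2 = c + d := by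
    rw [hc, hd, hp, hq]; exact_mod_cast hX
  have hYr : (c+d)*p*P - c*(p*Q + P*q) - c*q*Q = c := by
    rw [hc, hd, hp, hP, hq, hQ]; exact_mod_cast hY
  have hodd : Odd (2*(j+1)*m-3) := by
    have hexp : 2*(j+1)*m = 2*((j+1)*m) := by ring
    exact ⟨(j+1)*m - 2, by omega⟩
  have hdet := cfDet (aSeq (j+1)) ha (2*(j+1)*m-3)
  rw [hodd.neg_one_pow] at hdet
  have hdetr : P*q - p*Q = -1 := by
    rw [hp, hP, hq, hQ]; exact_mod_cast hdet
  have hq3 : (3:ℝ) ≤ q := by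
    rw [hq]
    have h1 : (3:ℤ) ≤ m := by exact_mod_cast hm3
    have h2 : (3:ℤ) ≤ cfDen (aSeq (j+1)) (2*(j+1)*m-3) := le_trans h1 hgrow
    exact_mod_cast h2
  have hqQ : q ≤ Q := by rw [hq, hQ]; exact_mod_cast cfDen_mono _ ha _
  have hQ3 : (3:ℝ) ≤ Q := le_trans hq3 hqQ
  have hW : (c+d)*αk - c ≠ 0 := by
    intro h0
    have hE : (c+d)*αk = c := by linarith
    have h1 : c*αk = 2*c*αk + c := by
      calc c*αk = ((c+d)*αk)*αk := by rw [hE]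
        _ = (c+d)*αk^2 := by ring
        _ = 2*c*αk + c := hquad'
    have h2 : (0:ℝ) ≤ c*αk := mul_nonneg (by linarith) hα0
    linarith
  have key := key_algebra (c+d) c αk p q P Q hquad' hXr hYr hdetr hW
  set E := q*αk - p with hE
  have hEneg : E < 0 := by
    by_contra hcon
    push_neg at hcon
    have t1 : (0:ℝ) ≤ (2*αk+2)*E*Q := by
      apply mul_nonneg (mul_nonneg (by linarith) hcon) (by linarith)
    nlinarith [key, sq_nonneg E]
  have hEb : -E ≤ 1/Q := by
    have := theta_bound j htend (2*(j+1)*m-3)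
    rw [← hp, ← hq, ← hQ, ← hE] at this
    calc -E ≤ |E| := neg_le_abs E
      _ ≤ 1/Q := this
  have hEabs : |E| ≤ 1/Q := by
    have := theta_bound j htend (2*(j+1)*m-3)
    rwa [← hp, ← hq, ← hQ, ← hE] at this
  obtain ⟨hfinal1, hfinal2⟩ := final_step αk E Q hα0 hα2 key hEneg hEb hQ3
  have hround : round ((cfDen (aSeq (j+1)) (2*(j+1)*m-3) : ℝ) * αk)
      = cfNum (aSeq (j+1)) (2*(j+1)*m-3) := by
    apply round_eq_of_close
    rw [← hp, ← hq]
    calc |q * αk - p| = |E| := by rw [hE]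
      _ ≤ 1/Q := hEabs
      _ < 1/2 := by
        rw [div_lt_div_iff₀ (by linarith) (by norm_num)]
        linarith
  have hdist : intDist ((cfDen (aSeq (j+1)) (2*(j+1)*m-3) : ℝ) * αk) = -E := by
    rw [intDist, hround, ← hp, ← hq, ← hE, abs_of_neg hEneg]
  rw [hdist, ← hQ]
  exact ⟨hfinal1, hfinal2⟩
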